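/- arXiv:1912.09262 — 2 statements merged into one kernel-verified Lean document; each statement's English description precedes it below -/
import Mathlib

section
/- D2D communication strictly reduces the minimum pipelined NDT if and only if the cache size lies in the intermediate regime: for 0 < r_F < 1, μ ∈ [0,1], and r_D > 0, one has δ_P(μ, r_F, r_D) < δ_P(μ, r_F, 0) if and only if (1 − r_F)/(2 + r_F) < μ < 1 − r_F. -/
/-! D2D communication only enlarges the denominator of the middle term of `ndtP`, so it lowers
`ndtP` exactly when that term, at `rD = 0`, strictly exceeds both others; each of these two
comparisons is a linear inequality in `mu`. -/

noncomputable def ndtP (mu rF rD : ℝ) : ℝ :=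
  max (max ((1 - 2*mu)/rF) ((2 - mu)/(1 + rF + rD))) 1

theorem max_max_lt_max_max_iff {α : Type*} [LinearOrder α] {a b' b c : α} (h : b' < b) :
    max (max a b') c < max (max a b) c ↔ max a c < b := by
  rw [max_right_comm a b', max_right_comm a b]
  constructor
  · intro hlt
    by_contra! hb
    exact hlt.not_ge (by rw [max_eq_left hb]; exact le_max_left _ _)
  · intro hb
    calc max (max a c) b' < b := max_lt hb h
      _ ≤ max (max a c) b := le_max_right _ _

theorem ndtP_D2D_term_lt {mu rF rD : ℝ} (hmu : mu < 2) (hF : 0 < rF) (hD : 0 < rD) :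
    (2 - mu) / (1 + rF + rD) < (2 - mu) / (1 + rF + 0) :=
  div_lt_div_of_pos_left (by linarith) (by linarith) (by linarith)

theorem one_lt_ndtP_D2D_term_iff {mu rF : ℝ} (hF : 0 < rF) :
    1 < (2 - mu) / (1 + rF + 0) ↔ mu < 1 - rF := by
  rw [one_lt_div (by linarith)]
  constructor <;> intro h <;> linarith

theorem ndtP_F_term_lt_iff {mu rF : ℝ} (hF : 0 < rF) :
    (1 - 2*mu) / rF < (2 - mu) / (1 + rF + 0) ↔ (1 - rF) / (2 + rF) < mu := by
  rw [div_lt_div_iff₀ hF (by linarith), div_lt_iff₀ (by linarith)]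
  constructor <;> intro h <;> linarith

theorem stmt10_general (mu rF rD : ℝ) (hF1 : 0 < rF)
    (hmu : mu ∈ Set.Icc (0:ℝ) 1) (hD : 0 < rD) :
    ndtP mu rF rD < ndtP mu rF 0 ↔
      ((1 - rF)/(2 + rF) < mu ∧ mu < 1 - rF) := by
  unfold ndtP
  rw [max_max_lt_max_max_iff (ndtP_D2D_term_lt (by linarith [hmu.2]) hF1 hD), max_lt_iff,
    ndtP_F_term_lt_iff hF1, one_lt_ndtP_D2D_term_iff hF1]

theorem stmt10 (mu rF rD : ℝ) (hF1 : 0 < rF) (hF2 : rF < 1)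
    (hmu : mu ∈ Set.Icc (0:ℝ) 1) (hD : 0 < rD) :
    ndtP mu rF rD < ndtP mu rF 0 ↔
      ((1 - rF)/(2 + rF) < mu ∧ mu < 1 - rF) :=
  stmt10_general mu rF rD hF1 hmu hD
end

section
/- Let 0 < r_F < 1 and suppose (1 − r_F)/(2 + r_F) < μ < 1 − r_F. Then δ_P(μ, r_F, 0) = (2 − μ)/(1 + r_F) > 1, and for every r_D > 0, δ_P(μ, r_F, r_D) < δ_P(μ, r_F, 0). -/
lemma ndtP_eq_of_le {mu rF rD : ℝ} (hF : (1 - 2*mu)/rF ≤ (2 - mu)/(1 + rF + rD))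
    (hone : 1 ≤ (2 - mu)/(1 + rF + rD)) :
    ndtP mu rF rD = (2 - mu)/(1 + rF + rD) := by
  rw [ndtP, max_eq_right hF, max_eq_left hone]

/-- Cross-multiplying, the comparison is `1 - rF < mu * (2 + rF)`, which is linear in `mu`. -/
lemma one_sub_two_mul_div_lt_of_lt {mu rF : ℝ} (hF : 0 < rF) (hmu : (1 - rF)/(2 + rF) < mu) :
    (1 - 2*mu)/rF < (2 - mu)/(1 + rF) := by
  have hmu' : 1 - rF < mu * (2 + rF) := (div_lt_iff₀ (by linarith)).mp hmu
  rw [div_lt_div_iff₀ hF (by linarith)]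
  linarith

lemma one_lt_two_sub_div_of_lt {mu rF : ℝ} (hF : 0 < rF) (hmu : mu < 1 - rF) :
    1 < (2 - mu)/(1 + rF) := by
  rw [lt_div_iff₀ (by linarith)]
  linarith

theorem stmt16_general (mu rF : ℝ) (hF1 : 0 < rF)
    (hmu1 : (1 - rF)/(2 + rF) < mu) (hmu2 : mu < 1 - rF) :
    (ndtP mu rF 0 = (2 - mu)/(1 + rF) ∧ 1 < ndtP mu rF 0) ∧
    ∀ rD : ℝ, 0 < rD → ndtP mu rF rD < ndtP mu rF 0 := by
  have hFdom := one_sub_two_mul_div_lt_of_lt hF1 hmu1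
  have hone := one_lt_two_sub_div_of_lt hF1 hmu2
  have h0 : ndtP mu rF 0 = (2 - mu)/(1 + rF) := by
    simpa using ndtP_eq_of_le (rD := 0) (by simpa using hFdom.le) (by simpa using hone.le)
  refine ⟨⟨h0, h0 ▸ hone⟩, fun rD hD => ?_⟩
  have hdecr : (2 - mu)/(1 + rF + rD) < (2 - mu)/(1 + rF) :=
    div_lt_div_of_pos_left (by linarith) (by linarith) (by linarith)
  rw [h0]
  exact max_lt (max_lt hFdom hdecr) hone

theorem stmt16 (mu rF : ℝ) (hF1 : 0 < rF) (hF2 : rF < 1)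
    (hmu1 : (1 - rF)/(2 + rF) < mu) (hmu2 : mu < 1 - rF) :
    (ndtP mu rF 0 = (2 - mu)/(1 + rF) ∧ 1 < ndtP mu rF 0) ∧
    ∀ rD : ℝ, 0 < rD → ndtP mu rF rD < ndtP mu rF 0 :=
  stmt16_general mu rF hF1 hmu1 hmu2
end
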